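/- Let T be a truss, N a Nijenhuis operator on T, and k, l ∈ ℕ. Then the operators N^k and N^l are compatible: N^k(a)N^l(b) = [N^k(a ∘_{N^l} b), N^l(a)N^k(b), N^l(a ∘_{N^k} b)] for all a,b ∈ T, where N^k denotes the k-fold composite of N (N^0 = id). -/

import Mathlib

/-- A truss: an abelian heap with an associative multiplication distributing
over the ternary heap operation on both sides. -/
class Truss (T : Type*) extends Mul T where
  hbr : T → T → T → T
  hbr_assoc : ∀ a b c d f : T, hbr (hbr a b c) d f = hbr a b (hbr c d f)
  hbr_idl : ∀ a b : T, hbr a a b = b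
  hbr_idr : ∀ a b : T, hbr b a a = b
  hbr_comm : ∀ a b c : T, hbr a b c = hbr c b a
  mul_assoc' : ∀ a b c : T, a * b * c = a * (b * c)
  mul_hbr_left : ∀ a b c d : T, a * hbr b c d = hbr (a * b) (a * c) (a * d)
  mul_hbr_right : ∀ a b c d : T, hbr b c d * a = hbr (b * a) (c * a) (d * a)

open Truss

variable {T : Type*} [Truss T]

/-- The Nijenhuis product `a ∘_N b = [N(a)b, N(ab), aN(b)]`. -/
def nijProd (N : T → T) (a b : T) : T :=
  hbr (N a * b) (N (a * b)) (a * N b)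

/-- `N` is a heap endomorphism of the truss `T`. -/
def IsHeapEndo (N : T → T) : Prop :=
  ∀ a b c : T, N (hbr a b c) = hbr (N a) (N b) (N c)

/-- `N` is a Nijenhuis operator: a heap endomorphism with `N(a ∘_N b) = N(a)N(b)`. -/
def IsNijenhuis (N : T → T) : Prop :=
  IsHeapEndo N ∧ ∀ a b : T, N (nijProd N a b) = N a * N b

/-!
Fixing a base point turns the heap into an abelian group in which `[x, y, z] = x - y + z`, and a
heap endomorphism into a map preserving `x - y + z`. In that setting the Nijenhuis identity gives,
by induction first on `k` and then on `l`,
`N^k(a) N^l(b) = N^l(N^k(a) b) - N^(k+l)(ab) + N^k(a N^l(b))`,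
using nothing about the multiplication. Adding this identity to its mirror image (with `k` and `l`
swapped) is exactly the compatibility of `N^k` and `N^l`.
-/

namespace Truss

abbrev retract (e : T) : AddCommGroup T :=
  letI : Add T := ⟨fun x y => hbr x e y⟩
  letI : Zero T := ⟨e⟩
  letI : Neg T := ⟨fun x => hbr e x e⟩
  { add_assoc := fun x y z => hbr_assoc x e y e z
    zero_add := fun x => hbr_idl e x
    add_zero := fun x => hbr_idr e x
    nsmul := nsmulRec
    zsmul := zsmulRec
    neg_add_cancel := fun x => by
      show hbr (hbr e x e) e x = e
      rw [hbr_assoc, hbr_idl, hbr_idr]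
    add_comm := fun x y => hbr_comm x e y }

theorem hbr_eq_sub_add (e x y z : T) :
    letI := retract e
    hbr x y z = x - y + z := by
  let := retract e
  rw [sub_eq_add_neg]
  show hbr x y z = hbr (hbr x e (hbr e y e)) e z
  rw [← hbr_assoc, hbr_idr, hbr_assoc, hbr_idl]

end Truss

section AffineNijenhuis

variable {A : Type*} [AddCommGroup A] {N : A → A}

theorem iterate_sub_add (hN : ∀ x y z, N (x - y + z) = N x - N y + N z) (m : ℕ) (x y z : A) :
    N^[m] (x - y + z) = N^[m] x - N^[m] y + N^[m] z := by
  induction m generalizing x y z with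
  | zero => rfl
  | succ m ih => simp only [Function.iterate_succ_apply', ih, hN]

variable [Mul A] (hN : ∀ x y z, N (x - y + z) = N x - N y + N z)
  (hNij : ∀ a b, N (N a * b - N (a * b) + a * N b) = N a * N b)
include hN hNij

theorem iterate_mul_apply_of_nijenhuis (k : ℕ) (a b : A) :
    N^[k] a * N b = N (N^[k] a * b) - N^[k + 1] (a * b) + N^[k] (a * N b) := by
  induction k with
  | zero => simp
  | succ k ih =>
    have hNij_iterate : N^[k + 1] a * N b =
        N (N^[k + 1] a * b) - N (N (N^[k] a * b)) + N (N^[k] a * N b) := by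
      rw [Function.iterate_succ_apply', ← hNij, hN]
    rw [hNij_iterate, ih, hN, ← Function.iterate_succ_apply' N (k + 1), ← Function.iterate_succ_apply' N k]
    abel

theorem iterate_mul_iterate_of_nijenhuis (k l : ℕ) (a b : A) :
    N^[k] a * N^[l] b = N^[l] (N^[k] a * b) - N^[k + l] (a * b) + N^[k] (a * N^[l] b) := by
  induction l generalizing b with
  | zero => simp
  | succ l ih =>
    rw [Function.iterate_succ_apply, ih, iterate_mul_apply_of_nijenhuis hN hNij, iterate_sub_add hN]
    simp only [← Function.iterate_succ_apply, ← Function.iterate_add_apply]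
    rw [show l + (k + 1) = k + (l + 1) by omega, show l + k = k + l from Nat.add_comm l k]
    abel

theorem iterate_compatible_of_nijenhuis (k l : ℕ) (a b : A) :
    N^[k] a * N^[l] b =
      N^[k] (N^[l] a * b - N^[l] (a * b) + a * N^[l] b) - N^[l] a * N^[k] b +
        N^[l] (N^[k] a * b - N^[k] (a * b) + a * N^[k] b) := by
  rw [iterate_sub_add hN, iterate_sub_add hN, iterate_mul_iterate_of_nijenhuis hN hNij k l,
    iterate_mul_iterate_of_nijenhuis hN hNij l k, ← Function.iterate_add_apply,
    ← Function.iterate_add_apply, Nat.add_comm l k]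
  abel

end AffineNijenhuis

/-- Let `N` be a Nijenhuis operator on a truss `T` and `k, l ∈ ℕ`.
Then `N^k` and `N^l` are compatible:
`N^k(a)N^l(b) = [N^k(a ∘_{N^l} b), N^l(a)N^k(b), N^l(a ∘_{N^k} b)]` for all `a, b ∈ T`. -/
theorem iterates_are_compatible (T : Type*) [Truss T] (N : T → T)
    (hN : IsNijenhuis N) (k l : ℕ) :
    ∀ a b : T,
      N^[k] a * N^[l] b =
        hbr (N^[k] (nijProd (N^[l]) a b)) (N^[l] a * N^[k] b)
          (N^[l] (nijProd (N^[k]) a b)) := by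
  intro a b
  let := Truss.retract a
  have hN_sub_add : ∀ x y z, N (x - y + z) = N x - N y + N z := fun x y z => by
    simpa only [Truss.hbr_eq_sub_add a] using hN.1 x y z
  have hN_nij : ∀ x y, N (N x * y - N (x * y) + x * N y) = N x * N y := fun x y => by
    simpa only [nijProd, Truss.hbr_eq_sub_add a] using hN.2 x y
  simpa only [nijProd, Truss.hbr_eq_sub_add a] using
    iterate_compatible_of_nijenhuis hN_sub_add hN_nij k l a b
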